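/- arXiv:math/0703679 — 2 statements merged into one kernel-verified Lean document; each statement's English description precedes it below -/
import Mathlib

section
/- Let V be a finite-dimensional real or complex vector superspace and g ⊆ gl(V) a Lie supersubalgebra. For a homogeneous element A ∈ g and a homogeneous algebraic curvature tensor R ∈ R(g) (i.e. a super skew-symmetric bilinear map R : V × V → g satisfying the first Bianchi super-identity R(X,Y)Z + (−1)^{|X|(|Y|+|Z|)} R(Y,Z)X + (−1)^{|Z|(|X|+|Y|)} R(Z,X)Y = 0), the map R_A defined by R_A(X,Y) = [A, R(X,Y)] − (−1)^{|A||R|} R(AX, Y) − (−1)^{|A|(|R|+|X|)} R(X, AY) again belongs to R(g); that is, R_A is super skew-symmetric with values in g and satisfies the first Bianchi super-identity. -/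
/-- A vector superspace structure on `V`: a pair of complementary subspaces. -/
structure SuperSpace (k V : Type*) [Field k] [AddCommGroup V] [Module k V] where
  even : Submodule k V
  odd : Submodule k V
  isCompl : IsCompl even odd

variable {k V : Type*} [Field k] [AddCommGroup V] [Module k V]

/-- The subspace of elements of parity `p`. -/
def SuperSpace.part (S : SuperSpace k V) (p : ZMod 2) : Submodule k V :=
  if p = 0 then S.even else S.odd

/-- The sign `(-1)^p`. -/
def sg (k : Type*) [Field k] (p : ZMod 2) : k := if p = 1 then -1 else 1

/-- `A` is a homogeneous endomorphism of parity `p`. -/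
def SuperSpace.HomEnd (S : SuperSpace k V) (p : ZMod 2) (A : Module.End k V) : Prop :=
  ∀ q x, x ∈ S.part q → A x ∈ S.part (q + p)

/-- Supercommutator of endomorphisms of parities `pa`, `pb`. -/
def sbr (pa pb : ZMod 2) (A B : Module.End k V) : Module.End k V :=
  A * B - sg k (pa * pb) • (B * A)

/-- Super skew-symmetry of a bilinear map with operator values. -/
def SuperSkew (S : SuperSpace k V) (R : V →ₗ[k] V →ₗ[k] Module.End k V) : Prop :=
  ∀ p q x y, x ∈ S.part p → y ∈ S.part q → R x y = - sg k (p * q) • R y x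

/-- The first Bianchi super-identity. -/
def Bianchi (S : SuperSpace k V) (R : V →ₗ[k] V →ₗ[k] Module.End k V) : Prop :=
  ∀ p q r x y z, x ∈ S.part p → y ∈ S.part q → z ∈ S.part r →
    R x y z + sg k (p * (q + r)) • R y z x + sg k (r * (p + q)) • R z x y = 0

/-- `R` is an algebraic curvature tensor of type `g`. -/
def CurvOf (S : SuperSpace k V) (g : Submodule k (Module.End k V))
    (R : V →ₗ[k] V →ₗ[k] Module.End k V) : Prop :=
  (∀ x y, R x y ∈ g) ∧ SuperSkew S R ∧ Bianchi S R

/-- `R` is homogeneous of parity `pR`: `R x y` has parity `pR + |x| + |y|`. -/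
def HomCurv (S : SuperSpace k V) (pR : ZMod 2)
    (R : V →ₗ[k] V →ₗ[k] Module.End k V) : Prop :=
  ∀ p q x y, x ∈ S.part p → y ∈ S.part q → S.HomEnd (pR + p + q) (R x y)

set_option maxHeartbeats 4000000 in
/-- for a homogeneous `A ∈ g` and a homogeneous algebraic curvature tensor
`R ∈ R(g)`, the tensor `R_A` again belongs to `R(g)`: it takes values in `g`, is super
skew-symmetric and satisfies the first Bianchi super-identity. -/
theorem curvature_action_mem {k V : Type*} [RCLike k] [AddCommGroup V] [Module k V]
    [FiniteDimensional k V]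
    (S : SuperSpace k V) (g : Submodule k (Module.End k V))
    (hg : ∀ (pa pb : ZMod 2) (A B : Module.End k V), A ∈ g → B ∈ g →
      S.HomEnd pa A → S.HomEnd pb B → sbr pa pb A B ∈ g)
    (R : V →ₗ[k] V →ₗ[k] Module.End k V) (pR : ZMod 2)
    (hRg : ∀ x y, R x y ∈ g) (hskew : SuperSkew S R) (hB : Bianchi S R)
    (hhom : HomCurv S pR R)
    (A : Module.End k V) (pA : ZMod 2) (hA : A ∈ g) (hAh : S.HomEnd pA A) :
    (∀ p q x y, x ∈ S.part p → y ∈ S.part q →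
        sbr pA (pR + p + q) A (R x y) - sg k (pA * pR) • R (A x) y
          - sg k (pA * (pR + p)) • R x (A y) ∈ g) ∧
    (∀ p q x y, x ∈ S.part p → y ∈ S.part q →
        sbr pA (pR + p + q) A (R x y) - sg k (pA * pR) • R (A x) y
          - sg k (pA * (pR + p)) • R x (A y)
        = - sg k (p * q) •
          (sbr pA (pR + q + p) A (R y x) - sg k (pA * pR) • R (A y) x
            - sg k (pA * (pR + q)) • R y (A x))) ∧
    (∀ p q r x y z, x ∈ S.part p → y ∈ S.part q → z ∈ S.part r →
        (sbr pA (pR + p + q) A (R x y) - sg k (pA * pR) • R (A x) y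
            - sg k (pA * (pR + p)) • R x (A y)) z
        + sg k (p * (q + r)) •
          ((sbr pA (pR + q + r) A (R y z) - sg k (pA * pR) • R (A y) z
            - sg k (pA * (pR + q)) • R y (A z)) x)
        + sg k (r * (p + q)) •
          ((sbr pA (pR + r + p) A (R z x) - sg k (pA * pR) • R (A z) x
            - sg k (pA * (pR + r)) • R z (A x)) y) = 0) := by

  have two : ∀ a : ZMod 2, a = 0 ∨ a = 1 := by decide
  refine ⟨?_, ?_, ?_⟩
  · intro p q x y hx hy
    exact Submodule.sub_mem _ (Submodule.sub_mem _
      (hg pA (pR + p + q) A (R x y) hA (hRg x y) hAh (hhom p q x y hx hy))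
      (Submodule.smul_mem _ _ (hRg _ _))) (Submodule.smul_mem _ _ (hRg _ _))
  · intro p q x y hx hy
    have e1 := hskew p q x y hx hy
    have e2 := hskew (p + pA) q (A x) y (hAh p x hx) hy
    have e3 := hskew p (q + pA) x (A y) hx (hAh q y hy)
    rcases two p with hp|hp <;> rcases two q with hq|hq <;>
      rcases two pA with ha|ha <;> rcases two pR with hr|hr <;>
      subst hp hq ha hr <;>
      simp only [sg, sbr, show (1+1:ZMod 2)=0 by decide, one_mul, mul_one, zero_mul, mul_zero, add_zero, zero_add, zero_ne_one, eq_self_iff_true, if_true, if_false] at e1 e2 e3 ⊢ <;>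
      rw [e1, e2, e3] <;>
      simp only [mul_smul_comm, smul_mul_assoc, smul_smul, smul_sub, smul_add, neg_smul, one_smul, neg_neg, mul_one, mul_neg, neg_mul, one_mul] <;>
      module
  · intro p q r x y z hx hy hz
    have h0 := congrArg A (hB p q r x y z hx hy hz)
    simp only [map_add, map_smul, map_zero] at h0
    have H1 := congrArg (fun t => (-(sg k (pA * pR))) • t)
      (hB (p + pA) q r (A x) y z (hAh p x hx) hy hz)
    have H2 := congrArg (fun t => (-(sg k (pA * (pR + p)))) • t)
      (hB p (q + pA) r x (A y) z hx (hAh q y hy) hz)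
    have H3 := congrArg (fun t => (-(sg k (pA * (pR + p + q)))) • t)
      (hB p q (r + pA) x y (A z) hx hy (hAh r z hz))
    rcases two p with hp|hp <;> rcases two q with hq|hq <;>
      rcases two r with hrr|hrr <;>
      rcases two pA with ha|ha <;> rcases two pR with hr|hr <;>
      subst hp hq hrr ha hr <;>
      simp only [sg, sbr, show (1+1:ZMod 2)=0 by decide, one_mul, mul_one, zero_mul, mul_zero, add_zero, zero_add, zero_ne_one, eq_self_iff_true, if_true, if_false,
        LinearMap.sub_apply, LinearMap.smul_apply, Module.End.mul_apply] at h0 H1 H2 H3 ⊢ <;>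
      linear_combination (norm := module) h0 + H1 + H2 + H3
end

section
/- Let V be a vector superspace, g ⊆ gl(V) a Lie supersubalgebra, and R ∈ R(g) an even algebraic curvature tensor of type g that is annihilated by the action of g (i.e. [A, R(X,Y)] = R(AX,Y) + R(X,AY) for all A ∈ g, X,Y ∈ V, with appropriate signs). Then h = g ⊕ V, with bracket defined by [x,y] = −R(x,y) for x,y ∈ V, [A,x] = A(x) for A ∈ g, x ∈ V, and [A,B] = A∘B − (−1)^{|A||B|} B∘A for A,B ∈ g, is a Lie superalgebra; in particular the super Jacobi identity holds for all triples of homogeneous elements of h. -/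
variable {k V : Type*} [Field k] [AddCommGroup V] [Module k V]

/-- The bracket on `h = g ⊕ V` determined by an algebraic curvature tensor `R`, for
elements of parities `p`, `q`. -/
def hbr {k V : Type*} [Field k] [AddCommGroup V] [Module k V]
    (R : V →ₗ[k] V →ₗ[k] Module.End k V) (p q : ZMod 2)
    (a b : Module.End k V × V) : Module.End k V × V :=
  (sbr p q a.1 b.1 - R a.2 b.2, a.1 b.2 - sg k (p * q) • b.1 a.2)


theorem zmod2_cases' : ∀ p : ZMod 2, p = 0 ∨ p = 1 := by decide
lemma sg_zero' : sg k 0 = 1 := if_neg (by decide)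
lemma sg_one' : sg k 1 = -1 := if_pos rfl
lemma two_eq_zero' : (1 + 1 : ZMod 2) = 0 := rfl

lemma sbr_sub_right' (p q : ZMod 2) (A B C : Module.End k V) :
    sbr p q A (B - C) = sbr p q A B - sbr p q A C := by
  simp only [sbr, mul_sub, sub_mul, smul_sub]; abel

lemma sbr_apply' (p q : ZMod 2) (A B : Module.End k V) (x : V) :
    sbr p q A B x = A (B x) - sg k (p * q) • B (A x) := by
  simp [sbr, Module.End.mul_apply]

lemma sbr_jacobi' (p q r : ZMod 2) (A B C : Module.End k V) :
    sg k (p * r) • sbr p (q + r) A (sbr q r B C)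
      + sg k (q * p) • sbr q (r + p) B (sbr r p C A)
      + sg k (r * q) • sbr r (p + q) C (sbr p q A B) = 0 := by
  rcases zmod2_cases' p with hp | hp <;> rcases zmod2_cases' q with hq | hq <;>
    rcases zmod2_cases' r with hr | hr <;> subst hp <;> subst hq <;> subst hr <;>
    simp only [sbr, sg_zero', sg_one', two_eq_zero', zero_mul, mul_zero, one_mul, mul_one,
      add_zero, zero_add, one_smul, neg_one_smul, neg_neg, smul_neg, neg_smul,
      sub_neg_eq_add] <;>
    noncomm_ring

/-- if `R ∈ R(g)` is even and annihilated by `g`, then `h = g ⊕ V` with the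
bracket `[x,y] = -R(x,y)`, `[A,x] = A x`, `[A,B]` the supercommutator, satisfies the super
Jacobi identity for all homogeneous triples. -/
theorem symmetric_decomposition_jacobi {k V : Type*} [Field k] [AddCommGroup V] [Module k V]
    (S : SuperSpace k V) (g : Submodule k (Module.End k V))
    (hg : ∀ (pa pb : ZMod 2) (A B : Module.End k V), A ∈ g → B ∈ g →
      S.HomEnd pa A → S.HomEnd pb B → sbr pa pb A B ∈ g)
    (R : V →ₗ[k] V →ₗ[k] Module.End k V)
    (hRg : ∀ x y, R x y ∈ g) (hskew : SuperSkew S R) (hB : Bianchi S R)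
    (heven : HomCurv S 0 R)
    (hann : ∀ (pA : ZMod 2) (A : Module.End k V), A ∈ g → S.HomEnd pA A →
      ∀ p q x y, x ∈ S.part p → y ∈ S.part q →
        sbr pA (p + q) A (R x y) = R (A x) y + sg k (pA * p) • R x (A y)) :
    ∀ (p q r : ZMod 2) (a b c : Module.End k V × V),
      a.1 ∈ g → S.HomEnd p a.1 → a.2 ∈ S.part p →
      b.1 ∈ g → S.HomEnd q b.1 → b.2 ∈ S.part q →
      c.1 ∈ g → S.HomEnd r c.1 → c.2 ∈ S.part r →
      sg k (p * r) • hbr R p (q + r) a (hbr R q r b c)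
        + sg k (q * p) • hbr R q (r + p) b (hbr R r p c a)
        + sg k (r * q) • hbr R r (p + q) c (hbr R p q a b) = 0 := by
  intro p q r a b c hAg hAh hx hBg hBh hy hCg hCh hz
  obtain ⟨A, x⟩ := a
  obtain ⟨B, y⟩ := b
  obtain ⟨C, z⟩ := c
  simp only at hAg hAh hx hBg hBh hy hCg hCh hz
  have hAy : A y ∈ S.part (q + p) := hAh q y hy
  have hBz : B z ∈ S.part (r + q) := hBh r z hz
  have hCx : C x ∈ S.part (p + r) := hCh p x hx
  have e1 := hann p A hAg hAh q r y z hy hz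
  have e2 := hann q B hBg hBh r p z x hz hx
  have e3 := hann r C hCg hCh p q x y hx hy
  have s1 := hskew (r + q) p (B z) x hBz hx
  have s2 := hskew (p + r) q (C x) y hCx hy
  have s3 := hskew r (q + p) z (A y) hz hAy
  have bb := hB p q r x y z hx hy hz
  have J := sbr_jacobi' (k := k) (V := V) p q r A B C
  rcases zmod2_cases' p with hp | hp <;> rcases zmod2_cases' q with hq | hq <;>
    rcases zmod2_cases' r with hr | hr <;> subst hp <;> subst hq <;> subst hr <;>
    refine Prod.ext ?_ ?_ <;>
    simp only [hbr, Prod.smul_mk, Prod.mk_add_mk, Prod.fst_add, Prod.snd_add, Prod.smul_fst,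
      Prod.smul_snd, Prod.fst_zero, Prod.snd_zero, Prod.neg_mk, Prod.fst_neg, Prod.snd_neg,
      sbr_sub_right', sbr_apply', map_sub, map_add, map_smul, LinearMap.sub_apply,
      LinearMap.smul_apply, sg_zero', sg_one', two_eq_zero', zero_mul, mul_zero, one_mul,
      mul_one, add_zero, zero_add, one_smul, neg_one_smul, neg_neg, smul_neg, neg_smul,
      sub_neg_eq_add] at e1 e2 e3 s1 s2 s3 bb J ⊢ <;>
    first
      | (rw [e1, e2, e3, s1, s2, s3]; linear_combination (norm := module) J)
      | linear_combination (norm := module) bb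
      | linear_combination (norm := module) -bb
end
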